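/- Every infinite T(m,n)-group with m ≤ 3 is abelian. -/

import Mathlib

/-- `G` is a `T(m,n)`-group: for every `m` subsets of `G` of cardinality `n`,
there exist distinct indices `i ≠ j` and commuting elements `x ∈ Xᵢ`, `y ∈ Xⱼ`. -/
def IsTGroup (G : Type*) [Group G] (m n : ℕ) : Prop :=
  ∀ X : Fin m → Finset G, (∀ i, (X i).card = n) →
    ∃ i j, i ≠ j ∧ ∃ x ∈ X i, ∃ y ∈ X j, x * y = y * x

/-!
A `T(m,n)`-group with `m ≤ 3` is a `T(3,n)`-group, and no `3n` of its elements pairwise fail to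
commute. If `G` were non-abelian, the centralizers of a largest pairwise non-commuting set would
cover `G`, so by B. H. Neumann's lemma two non-commuting elements `u`, `v` of it have centralizers
of finite index. Their intersection `K` is then infinite, and Ramsey's theorem yields `n` pairwise
commuting elements `T ⊆ K`. Since `u`, `v`, `uv` pairwise do not commute and `T` centralizes them,
no element of `uT`, `vT`, `uvT` commutes with one of another translate, contradicting `T(3,n)`.
-/

open Finset
open scoped Pointwise

section Ramsey

variable {α : Type*}

theorem Finset.exists_pairwise_insert_of_mem [DecidableEq α] {r : α → α → Prop}
    {S T : Finset α} {a : α} (ha : a ∈ S) (hTS : T ⊆ S.erase a) (hT : (T : Set α).Pairwise r)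
    (haT : ∀ x ∈ T, r a x ∧ r x a) :
    ∃ T' ⊆ S, #T + 1 ≤ #T' ∧ (T' : Set α).Pairwise r := by
  have haT' : a ∉ T := fun h => notMem_erase a S (hTS h)
  refine ⟨insert a T, insert_subset ha (hTS.trans (erase_subset a S)), ?_, ?_⟩
  · rw [card_insert_of_notMem haT']
  · rw [coe_insert, Set.pairwise_insert]
    exact ⟨hT, fun x hx _ => haT x hx⟩

theorem exists_pairwise_or_pairwise_not (r : α → α → Prop) [Std.Symm r] :
    ∀ s t : ℕ, ∃ R : ℕ, ∀ S : Finset α, R ≤ #S →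
      (∃ T ⊆ S, s ≤ #T ∧ (T : Set α).Pairwise r) ∨
        ∃ T ⊆ S, t ≤ #T ∧ (T : Set α).Pairwise fun x y => ¬r x y
  | 0, _ => ⟨0, fun _ _ => .inl ⟨∅, empty_subset _, le_rfl, by simp⟩⟩
  | _ + 1, 0 => ⟨0, fun _ _ => .inr ⟨∅, empty_subset _, le_rfl, by simp⟩⟩
  | s + 1, t + 1 => by
    classical
    obtain ⟨R₁, hR₁⟩ := exists_pairwise_or_pairwise_not r s (t + 1)
    obtain ⟨R₂, hR₂⟩ := exists_pairwise_or_pairwise_not r (s + 1) t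
    refine ⟨R₁ + R₂ + 1, fun S hS => ?_⟩
    obtain ⟨a, ha⟩ : S.Nonempty := card_pos.mp (by omega)
    have hsplit := card_filter_add_card_filter_not (s := S.erase a) (r a)
    rw [card_erase_of_mem ha] at hsplit
    by_cases hA : R₁ ≤ #((S.erase a).filter (r a))
    · rcases hR₁ _ hA with ⟨T, hTS, hT, hTr⟩ | ⟨T, hTS, hT, hTr⟩
      · obtain ⟨T', hT'S, hT', hT'r⟩ := exists_pairwise_insert_of_mem ha
          (hTS.trans (filter_subset _ _)) hTr fun x hx =>
            have hax := (mem_filter.mp (hTS hx)).2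
            ⟨hax, symm hax⟩
        exact .inl ⟨T', hT'S, by omega, hT'r⟩
      · exact .inr ⟨T, hTS.trans ((filter_subset _ _).trans (erase_subset a S)), hT, hTr⟩
    · rcases hR₂ _ (by omega : R₂ ≤ #((S.erase a).filter fun x => ¬r a x))
        with ⟨T, hTS, hT, hTr⟩ | ⟨T, hTS, hT, hTr⟩
      · exact .inl ⟨T, hTS.trans ((filter_subset _ _).trans (erase_subset a S)), hT, hTr⟩
      · obtain ⟨T', hT'S, hT', hT'r⟩ := exists_pairwise_insert_of_mem ha
          (hTS.trans (filter_subset _ _)) hTr fun x hx =>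
            have hax := (mem_filter.mp (hTS hx)).2
            ⟨hax, fun hxa => hax (symm hxa)⟩
        exact .inr ⟨T', hT'S, by omega, hT'r⟩

theorem exists_pairwise_forall_card_le {r : α → α → Prop} {N : ℕ}
    (hN : ∀ S : Finset α, (S : Set α).Pairwise r → #S ≤ N) :
    ∃ C : Finset α, (C : Set α).Pairwise r ∧
      ∀ S : Finset α, (S : Set α).Pairwise r → #S ≤ #C := by
  let cards := {k | ∃ S : Finset α, (S : Set α).Pairwise r ∧ #S = k}
  have hbdd : BddAbove cards := ⟨N, by rintro _ ⟨S, hS, rfl⟩; exact hN S hS⟩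
  obtain ⟨C, hC, hCcard⟩ := Nat.sSup_mem (s := cards) ⟨0, ∅, by simp⟩ hbdd
  exact ⟨C, hC, fun S hS => hCcard ▸ le_csSup hbdd ⟨S, hS, rfl⟩⟩

end Ramsey

section Group

variable {G : Type*} [Group G] {m n : ℕ}

theorem Commute.of_mul_mul {a b c d : G} (h : Commute (a * c) (b * d)) (hcb : Commute c b)
    (hda : Commute d a) (hcd : Commute c d) : Commute a b := by
  refine mul_right_cancel (b := c * d) ?_
  calc a * b * (c * d) = a * (c * (b * d)) := by rw [hcb.left_comm, mul_assoc]
    _ = b * (d * (a * c)) := by simpa only [mul_assoc] using h.eq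
    _ = b * a * (c * d) := by rw [hda.left_comm, ← hcd.eq, mul_assoc]

namespace IsTGroup

theorem mono {m' : ℕ} (h : IsTGroup G m n) (hm : m ≤ m') : IsTGroup G m' n := by
  intro X hX
  obtain ⟨i, j, hij, hx⟩ := h (X ∘ Fin.castLE hm) fun i => hX _
  exact ⟨_, _, (Fin.castLE_injective hm).ne hij, hx⟩

theorem card_lt_of_pairwise_not_commute (h : IsTGroup G m n) {S : Finset G}
    (hS : (S : Set G).Pairwise fun x y => ¬Commute x y) : #S < m * n := by
  by_contra! hcard
  let f : Fin m × Fin n ↪ G := finProdFinEquiv.toEmbedding.trans <|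
    (Fin.castLEEmb hcard).trans <| S.equivFin.symm.toEmbedding.trans <| .subtype _
  have hfS : ∀ k, f k ∈ S := fun k => (S.equivFin.symm _).2
  obtain ⟨i, j, hij, x, hx, y, hy, hxy⟩ :=
    h (fun i => univ.map ((Function.Embedding.sectR i (Fin n)).trans f)) fun i => by simp
  simp only [mem_map, mem_univ, true_and] at hx hy
  obtain ⟨k, rfl⟩ := hx
  obtain ⟨l, rfl⟩ := hy
  exact hS (hfS _) (hfS _) (f.injective.ne fun e => hij (congrArg Prod.fst e)) hxy

theorem exists_pairwise_commute_of_infinite (h : IsTGroup G m n) {s : Set G} (hs : s.Infinite) :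
    ∃ T : Finset G, ↑T ⊆ s ∧ #T = n ∧ (T : Set G).Pairwise Commute := by
  obtain ⟨R, hR⟩ := exists_pairwise_or_pairwise_not (Commute : G → G → Prop) n (m * n)
  obtain ⟨S, hSs, hS⟩ := hs.exists_subset_card_eq R
  rcases hR S hS.ge with ⟨T, hTS, hT, hTc⟩ | ⟨T, -, hT, hTnc⟩
  · obtain ⟨T', hT'T, hT'⟩ := exists_subset_card_eq hT
    exact ⟨T', (coe_subset.mpr (hT'T.trans hTS)).trans hSs, hT', hTc.mono (coe_subset.mpr hT'T)⟩
  · exact absurd (h.card_lt_of_pairwise_not_commute hTnc) hT.not_gt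

end IsTGroup

theorem not_isTGroup_of_translates {b : Fin m → G}
    (hb : Pairwise fun i j => ¬Commute (b i) (b j))
    {T : Finset G} (hTcard : #T = n) (hT : (T : Set G).Pairwise Commute)
    (hTb : ∀ t ∈ T, ∀ i, Commute t (b i)) : ¬IsTGroup G m n := by
  intro h
  obtain ⟨i, j, hij, x, hx, y, hy, hxy⟩ :=
    h (fun i => T.map (mulLeftEmbedding (b i))) fun i => by simpa using hTcard
  simp only [mem_map, mulLeftEmbedding_apply] at hx hy
  obtain ⟨c, hc, rfl⟩ := hx
  obtain ⟨d, hd, rfl⟩ := hy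
  have hcd : Commute c d := by
    obtain rfl | hne := eq_or_ne c d
    exacts [Commute.refl c, hT hc hd hne]
  exact hb hij (Commute.of_mul_mul hxy (hTb c hc j) (hTb d hd i) hcd)

theorem exists_not_commute_finiteIndex_centralizer {N : ℕ}
    (hN : ∀ S : Finset G, (S : Set G).Pairwise (fun x y => ¬Commute x y) → #S ≤ N)
    {a b : G} (hab : ¬Commute a b) :
    ∃ u v : G, ¬Commute u v ∧ (Subgroup.centralizer {u}).FiniteIndex ∧
      (Subgroup.centralizer {v}).FiniteIndex := by
  classical
  obtain ⟨C, hC, hCmax⟩ := exists_pairwise_forall_card_le hN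
  have hCcover : ⋃ c ∈ C, (1 : G) • (Subgroup.centralizer {c} : Set G) = Set.univ := by
    refine Set.eq_univ_of_forall fun g => ?_
    by_contra hg
    simp only [one_smul, Set.mem_iUnion, SetLike.mem_coe, Subgroup.mem_centralizer_singleton_iff,
      not_exists] at hg
    have hgC : g ∉ C := fun h => hg g h rfl
    have := hCmax (insert g C) <| by
      rw [coe_insert, Set.pairwise_insert]
      exact ⟨hC, fun c hc _ => ⟨hg c hc, fun h => hg c hc h.symm⟩⟩
    rw [card_insert_of_notMem hgC] at this
    omega
  have hFcover : ∀ g : G, ∃ c ∈ C, (Subgroup.centralizer {c}).FiniteIndex ∧ Commute g c := by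
    intro g
    have hg := Set.eq_univ_iff_forall.mp
      (Subgroup.leftCoset_cover_filter_FiniteIndex hCcover) g
    simp only [one_smul, Set.mem_iUnion, SetLike.mem_coe, mem_filter, exists_prop] at hg
    obtain ⟨c, ⟨hc, hfin⟩, hgc⟩ := hg
    exact ⟨c, hc, hfin, Subgroup.mem_centralizer_singleton_iff.mp hgc⟩
  have hC2 : 1 < #C := by
    have := hCmax {a, b} <| by
      rw [coe_pair, Set.pairwise_pair]
      exact fun _ => ⟨hab, fun h => hab h.symm⟩
    rw [card_pair (by rintro rfl; exact hab (.refl a))] at this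
    omega
  obtain ⟨u, huC, hu, -⟩ := hFcover 1
  obtain ⟨w, hwC, hwu⟩ := exists_mem_ne hC2 u
  obtain ⟨v, hvC, hv, hwv⟩ := hFcover w
  have hvu : v ≠ u := by
    rintro rfl
    exact hC hwC huC hwu hwv
  exact ⟨u, v, hC huC hvC hvu.symm, hu, hv⟩

theorem pairwise_not_commute_mul {u v : G} (h : ¬Commute u v) :
    Pairwise fun i j : Fin 3 => ¬Commute (![u, v, u * v] i) (![u, v, u * v] j) := by
  have hu : ¬Commute u (u * v) := by simpa [commute_iff_eq, mul_assoc] using h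
  have hv : ¬Commute v (u * v) := by simpa [commute_iff_eq, ← mul_assoc, eq_comm] using h
  intro i j hij
  fin_cases i <;> fin_cases j <;> simp_all [Commute.symm_iff]

theorem Subgroup.infinite_of_finiteIndex [Infinite G] (H : Subgroup G) [H.FiniteIndex] :
    (H : Set G).Infinite := by
  intro hH
  have : Finite H := hH.to_subtype
  have : Finite G := H.finite_iff_finite_and_finiteIndex.mpr ⟨this, inferInstance⟩
  exact not_finite G

end Group

theorem stmt_14_general (G : Type*) [Group G] [Infinite G] (m n : ℕ)
    (hm : m ≤ 3) (h : IsTGroup G m n) :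
    ∀ a b : G, a * b = b * a := by
  have h3 : IsTGroup G 3 n := h.mono hm
  by_contra! hG
  obtain ⟨a, b, hab⟩ := hG
  obtain ⟨u, v, huv, hu, hv⟩ := exists_not_commute_finiteIndex_centralizer
    (fun S hS => (h3.card_lt_of_pairwise_not_commute hS).le) hab
  let K := Subgroup.centralizer {u} ⊓ Subgroup.centralizer {v}
  obtain ⟨T, hTK, hTcard, hT⟩ := h3.exists_pairwise_commute_of_infinite K.infinite_of_finiteIndex
  refine not_isTGroup_of_translates (pairwise_not_commute_mul huv) hTcard hT
    (fun t ht i => ?_) h3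
  obtain ⟨htu, htv⟩ := Subgroup.mem_inf.mp (hTK ht)
  rw [Subgroup.mem_centralizer_singleton_iff] at htu htv
  fin_cases i
  exacts [htu, htv, Commute.mul_right htu htv]

theorem stmt_14 (G : Type*) [Group G] [Infinite G] (m n : ℕ) (hm2 : 2 ≤ m)
    (hm : m ≤ 3) (hn : 1 ≤ n) (h : IsTGroup G m n) :
    ∀ a b : G, a * b = b * a :=
  stmt_14_general G m n hm h
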